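/- In the Yangian Y(gl_{1|1}), the relation (u−v)[d_1(u), e_1(v)] = d_1(u)(e_1(v) − e_1(u)) holds as an identity of formal series (coefficientwise after clearing the factor u−v). -/

import Mathlib

/-!
Common setup: the super Yangian `Y(gl_{m|n})`, defined as the quotient of the free
algebra on generators `t_{ij}^{(r)}` (here `(i, j, r) : Fin (m+n) × Fin (m+n) × ℕ`
encodes `t_{ij}^{(r+1)}`) by the defining relations, obtained by equating the
coefficients of `u^{-r} v^{-s}` in
`(u-v)[t_{ij}(u), t_{kl}(v)]
   = (-1)^{ī j̄ + ī k̄ + j̄ k̄} (t_{kj}(u) t_{il}(v) - t_{kj}(v) t_{il}(u))`.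
Power series in `u^{-1}` are modelled by `PowerSeries`, whose variable stands
for `u^{-1}`.
-/

noncomputable section

namespace SuperYangian

open scoped BigOperators

/-- Generator index: `(i, j, r)` encodes the generator `t_{ij}^{(r+1)}`. -/
abbrev Gen (N : ℕ) := Fin N × Fin N × ℕ

/-- The free algebra on the generators. -/
abbrev FA (N : ℕ) := FreeAlgebra ℂ (Gen N)

/-- Parity of an index: `0` for the first `m` indices, `1` for the remaining ones. -/
def par (m : ℕ) {N : ℕ} (i : Fin N) : ℕ := if (i : ℕ) < m then 0 else 1

/-- The sign `(-1)^{ī j̄ + ī k̄ + j̄ k̄}`. -/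
def sgn3 (m : ℕ) {N : ℕ} (i j k : Fin N) : ℤ :=
  (-1) ^ (par m i * par m j + par m i * par m k + par m j * par m k)

/-- The series `t_{ij}(u) = δ_{ij} + Σ_{r ≥ 1} t_{ij}^{(r)} u^{-r}` over the free algebra. -/
def tF {N : ℕ} (i j : Fin N) : PowerSeries (FA N) :=
  PowerSeries.mk fun r =>
    if r = 0 then (if i = j then 1 else 0) else FreeAlgebra.ι ℂ (i, j, r - 1)

/-- The element of the free algebra expressing, at bidegree `u^{-r} v^{-s}`, the defining
relation `(u-v)[t_{ij}(u), t_{kl}(v)]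
  = (-1)^{ī j̄ + ī k̄ + j̄ k̄}(t_{kj}(u) t_{il}(v) - t_{kj}(v) t_{il}(u))`. -/
def relElt (m : ℕ) {N : ℕ} (i j k l : Fin N) (r s : ℕ) : FA N :=
  ((PowerSeries.coeff (r+1) (tF i j)) * (PowerSeries.coeff s (tF k l))
      - (PowerSeries.coeff s (tF k l)) * (PowerSeries.coeff (r+1) (tF i j)))
  - ((PowerSeries.coeff r (tF i j)) * (PowerSeries.coeff (s+1) (tF k l))
      - (PowerSeries.coeff (s+1) (tF k l)) * (PowerSeries.coeff r (tF i j)))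
  - sgn3 m i j k •
      ((PowerSeries.coeff r (tF k j)) * (PowerSeries.coeff s (tF i l))
        - (PowerSeries.coeff s (tF k j)) * (PowerSeries.coeff r (tF i l)))

/-- The defining relations of `Y(gl_{m|n})`. -/
inductive YRel (m n : ℕ) : FA (m+n) → FA (m+n) → Prop
  | rel (i j k l : Fin (m+n)) (r s : ℕ) : YRel m n (relElt m i j k l r s) 0

/-- The super Yangian `Y(gl_{m|n})`. -/
abbrev Yangian (m n : ℕ) := RingQuot (YRel m n)

/-- The canonical projection from the free algebra onto the Yangian. -/
def proj (m n : ℕ) : FA (m+n) →ₐ[ℂ] Yangian m n := RingQuot.mkAlgHom ℂ (YRel m n)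

/-- The generator `t_{ij}^{(r+1)}` of `Y(gl_{m|n})` (`tGen i j r` is `t_{ij}^{(r+1)}`,
so that as `r` ranges over `ℕ` we get exactly the generators `t_{ij}^{(s)}`, `s ≥ 1`). -/
def tGen {m n : ℕ} (i j : Fin (m+n)) (r : ℕ) : Yangian m n :=
  proj m n (FreeAlgebra.ι ℂ (i, j, r))

/-- The generating series `t_{ij}(u) ∈ Y(gl_{m|n})[[u^{-1}]]`. -/
def t {m n : ℕ} (i j : Fin (m+n)) : PowerSeries (Yangian m n) :=
  PowerSeries.mk fun r => if r = 0 then (if i = j then 1 else 0) else tGen i j (r - 1)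

/-- The matrix `T(u)`. -/
def T (m n : ℕ) : Matrix (Fin (m+n)) (Fin (m+n)) (PowerSeries (Yangian m n)) :=
  Matrix.of fun i j => t i j

/-- The inverse matrix `T(u)^{-1}` (`T(u)` is a unit of the matrix ring, since its
constant term is the identity matrix, so `Ring.inverse` produces the genuine inverse). -/
def T' (m n : ℕ) : Matrix (Fin (m+n)) (Fin (m+n)) (PowerSeries (Yangian m n)) :=
  Ring.inverse (T m n)

/-- The series `t'_{ij}(u)`: the `(i,j)` entry of `T(u)^{-1}`. -/
def t' {m n : ℕ} (i j : Fin (m+n)) : PowerSeries (Yangian m n) := T' m n i j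

/-- `g(u - c)`: substitute `u - c` for `u` and expand in powers of `u^{-1}`, using
`(u-c)^{-r} = Σ_{s ≥ 0} C(r+s-1, s) c^s u^{-r-s}`. -/
def shift {A : Type*} [Ring A] (c : ℤ) (g : PowerSeries A) : PowerSeries A :=
  PowerSeries.mk fun p => ∑ r ∈ Finset.range (p+1),
    (((p-1).choose (p-r) : ℤ) * c ^ (p-r)) • PowerSeries.coeff r g

/-- `g(-u)`: replace `u^{-r}` by `(-1)^r u^{-r}`. -/
def negu {A : Type*} [Ring A] (g : PowerSeries A) : PowerSeries A :=
  PowerSeries.mk fun p => ((-1 : ℤ) ^ p) • PowerSeries.coeff p g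

/-- The quantum determinant type series
`C_m(u) = Σ_{τ ∈ S_m} sgn τ · t_{τ(1)1}(u) t_{τ(2)2}(u-1) ⋯ t_{τ(m)m}(u-m+1)`
of the `gl_m` block of `Y(gl_{m|n})`. -/
def Cm (m n : ℕ) : PowerSeries (Yangian m n) :=
  ∑ τ : Equiv.Perm (Fin m), (Equiv.Perm.sign τ : ℤ) •
    ((List.finRange m).map fun (a : Fin m) =>
      shift ((a : ℕ) : ℤ)
        (t (Fin.castLE (Nat.le_add_right m n) (τ a))
           (Fin.castLE (Nat.le_add_right m n) a))).prod

/-- The second factor of the quantum Berezinian: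
`Σ_{σ ∈ S_n} sgn σ · t'_{m+1, m+σ(1)}(u-m+1) ⋯ t'_{m+n, m+σ(n)}(u-m+n)`. -/
def berSecond (m n : ℕ) : PowerSeries (Yangian m n) :=
  ∑ σ : Equiv.Perm (Fin n), (Equiv.Perm.sign σ : ℤ) •
    ((List.finRange n).map fun (b : Fin n) =>
      shift ((m : ℤ) - 1 - (b : ℕ))
        (t' (Fin.natAdd m b) (Fin.natAdd m (σ b)))).prod

/-- The quantum Berezinian `b_{m|n}(u)`. -/
def ber (m n : ℕ) : PowerSeries (Yangian m n) := Cm m n * berSecond m n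

/-- Gauss decomposition data: `D` is diagonal (with invertible diagonal entries, i.e.
constant term `1`), `E` upper unitriangular, `F` lower unitriangular, and
`T(u) = F(u) D(u) E(u)`. -/
def IsGauss (m n : ℕ)
    (F D E : Matrix (Fin (m+n)) (Fin (m+n)) (PowerSeries (Yangian m n))) : Prop :=
  (∀ i j, i ≠ j → D i j = 0) ∧
  (∀ i, PowerSeries.constantCoeff (D i i) = 1) ∧
  (∀ i, E i i = 1) ∧ (∀ i j : Fin (m+n), (j : ℕ) < (i : ℕ) → E i j = 0) ∧
  (∀ i, F i i = 1) ∧ (∀ i j : Fin (m+n), (i : ℕ) < (j : ℕ) → F i j = 0) ∧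
  T m n = F * D * E

/-- The top-left `(i+1) × (i+1)` submatrix of `T(u)` (`0`-indexed `i`). -/
def subT (m n : ℕ) (i : Fin (m+n)) :
    Matrix (Fin ((i : ℕ)+1)) (Fin ((i : ℕ)+1)) (PowerSeries (Yangian m n)) :=
  Matrix.of fun a b => t (Fin.castLE i.isLt a) (Fin.castLE i.isLt b)

/-- The quasideterminant `d_{i+1}(u)` (`0`-indexed: `dQ m n i` is the `(i+1, i+1)`
quasideterminant of the top-left `(i+1) × (i+1)` submatrix of `T(u)`). -/
def dQ (m n : ℕ) (i : Fin (m+n)) : PowerSeries (Yangian m n) :=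
  Ring.inverse (Ring.inverse (subT m n i) (Fin.last (i : ℕ)) (Fin.last (i : ℕ)))

/-- Formal series in the two variables `u^{-1}`, `v^{-1}` (variable `0` is `u^{-1}`,
variable `1` is `v^{-1}`). -/
abbrev Bi (A : Type*) := MvPowerSeries (Fin 2) A

/-- Embed a series in `u^{-1}` into the two-variable series ring. -/
def inU {A : Type*} [Semiring A] (g : PowerSeries A) : Bi A :=
  fun d => if d 1 = 0 then PowerSeries.coeff (d 0) g else 0

/-- Embed a series in `v^{-1}` into the two-variable series ring. -/
def inV {A : Type*} [Semiring A] (g : PowerSeries A) : Bi A :=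
  fun d => if d 0 = 0 then PowerSeries.coeff (d 1) g else 0

/-- The coefficient of `u^{-r} v^{-s}`. -/
def bc {A : Type*} [Semiring A] (r s : ℕ) (g : Bi A) : A :=
  MvPowerSeries.coeff (Finsupp.single 0 r + Finsupp.single 1 s) g

/-- The characterizing property of the automorphism `ω_{m|n}`:
`ω(t_{ij}(u)) = t'_{ij}(-u)`, i.e. `T(u) ↦ T(-u)^{-1}` coefficientwise. -/
def omegaProp (m n : ℕ) (ω : Yangian m n →ₐ[ℂ] Yangian m n) : Prop :=
  ∀ i j : Fin (m+n), PowerSeries.map ω.toRingHom (t i j) = negu (t' i j)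

/-- The index map `i ↦ m+n+1-i` (in `1`-based labelling) from the indices of
`Y(gl_{m|n})` to those of `Y(gl_{n|m})`. -/
def flipIdx {m n : ℕ} (i : Fin (m+n)) : Fin (n+m) :=
  ⟨m + n - 1 - (i : ℕ), by have := i.isLt; omega⟩

/-- The characterizing property of the isomorphism `ρ_{m|n} : Y(gl_{m|n}) → Y(gl_{n|m})`:
`ρ(t_{ij}(u)) = t_{m+n+1-i, m+n+1-j}(-u)`. -/
def rhoProp (m n : ℕ) (ρ : Yangian m n →ₐ[ℂ] Yangian n m) : Prop :=
  ∀ i j : Fin (m+n), PowerSeries.map ρ.toRingHom (t i j) = negu (t (flipIdx i) (flipIdx j))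

/-- The index map `i ↦ k + i` from indices of `Y(gl_{m|n})` to indices of
`Y(gl_{m+k|n})` (whose total size `M + n` is recorded via `M = m + k`). -/
def addIdx {m n : ℕ} (k M : ℕ) (hM : M = m + k) (i : Fin (m+n)) : Fin (M+n) :=
  ⟨k + (i : ℕ), by have := i.isLt; omega⟩

/-- The characterizing property of the inclusion `φ_{m|n} : Y(gl_{m|n}) → Y(gl_{m+k|n})`:
`t_{ij}^{(r)} ↦ t_{k+i, k+j}^{(r)}`. -/
def phiProp (m n k M : ℕ) (hM : M = m + k) (φ : Yangian m n →ₐ[ℂ] Yangian M n) : Prop :=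
  ∀ i j : Fin (m+n),
    PowerSeries.map φ.toRingHom (t i j) = t (addIdx k M hM i) (addIdx k M hM j)

/-- The `(k+1, k+1)` quasideterminant of a `(k+1) × (k+1)` matrix. -/
def qdet {R : Type*} [Ring R] {k : ℕ} (X : Matrix (Fin (k+1)) (Fin (k+1)) R) : R :=
  Ring.inverse (Ring.inverse X (Fin.last k) (Fin.last k))

end SuperYangian
namespace SuperYangian

/-- `d_1(u) = t_{11}(u)` in `Y(gl_{1|1})`. -/
def d1 : PowerSeries (Yangian 1 1) := t (m := 1) (n := 1) 0 0

/-- `e_1(u) = t_{11}(u)^{-1} t_{12}(u)` in `Y(gl_{1|1})`. -/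
def e1 : PowerSeries (Yangian 1 1) := Ring.inverse d1 * t (m := 1) (n := 1) 0 1

/-- `f_1(u) = t_{21}(u) t_{11}(u)^{-1}` in `Y(gl_{1|1})`. -/
def f1 : PowerSeries (Yangian 1 1) := t (m := 1) (n := 1) 1 0 * Ring.inverse d1

/-- `d_2(u) = t_{22}(u) - t_{21}(u) t_{11}(u)^{-1} t_{12}(u)` in `Y(gl_{1|1})`. -/
def d2 : PowerSeries (Yangian 1 1) :=
  t (m := 1) (n := 1) 1 1
    - t (m := 1) (n := 1) 1 0 * Ring.inverse d1 * t (m := 1) (n := 1) 0 1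

end SuperYangian

/-!
Write `x = u⁻¹`, `y = v⁻¹` for the variables `X 0`, `X 1` of `Bi A`. Multiplying by `x y`
turns the factor `u - v` into the central series `y - x`, so the defining relation reads
`(y - x)[t_{ij}(u), t_{kl}(v)] = ± x y (t_{kj}(u) t_{il}(v) - t_{kj}(v) t_{il}(u))`.
For `i = j = k = l = 1` this forces the coefficients of `d(u) = t_{11}(u)` to commute, so
`d(u)` commutes with `d(v)⁻¹`. With `b = t_{12}` and `e = d⁻¹ b`,
`(y - x)[d(u), d(v)⁻¹ b(v)] = d(v)⁻¹ (y - x)[d(u), b(v)]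
  = x y d(v)⁻¹ (d(u) b(v) - d(v) b(u)) = x y (d(u) e(v) - b(u)) = x y d(u) (e(v) - e(u))`,
and comparing the coefficients of `x^{r+1} y^{s+1}` gives the claim.
-/

namespace SuperYangian

section Bivariate

open Finset.HasAntidiagonal

variable {A : Type*}

lemma single_add_single_eq (d : Fin 2 →₀ ℕ) :
    Finsupp.single 0 (d 0) + Finsupp.single 1 (d 1) = d := by
  ext i; fin_cases i <;> simp

lemma bc_ext [Semiring A] {φ ψ : Bi A} (h : ∀ p q, bc p q φ = bc p q ψ) : φ = ψ := by
  ext d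
  rw [← single_add_single_eq d]
  exact h _ _

lemma filter_antidiagonal_fst_eq_zero (n : ℕ) : {x ∈ antidiagonal n | x.1 = 0} = {(0, n)} := by
  ext ⟨a, b⟩
  simp only [Finset.mem_filter, mem_antidiagonal, Finset.mem_singleton, Prod.mk.injEq]
  omega

lemma filter_antidiagonal_snd_eq_zero (n : ℕ) : {x ∈ antidiagonal n | x.2 = 0} = {(n, 0)} := by
  ext ⟨a, b⟩
  simp only [Finset.mem_filter, mem_antidiagonal, Finset.mem_singleton, Prod.mk.injEq]
  omega

lemma bc_mul [Semiring A] (φ ψ : Bi A) (p q : ℕ) :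
    bc p q (φ * ψ) = ∑ i ∈ antidiagonal p, ∑ j ∈ antidiagonal q,
      bc i.1 j.1 φ * bc i.2 j.2 ψ := by
  rw [bc, MvPowerSeries.coeff_mul, ← Finset.sum_product']
  symm
  refine Finset.sum_nbij'
    (fun ij => (Finsupp.single 0 ij.1.1 + Finsupp.single 1 ij.2.1,
      Finsupp.single 0 ij.1.2 + Finsupp.single 1 ij.2.2))
    (fun fg => ((fg.1 0, fg.2 0), (fg.1 1, fg.2 1))) ?_ ?_ ?_ ?_ ?_
  · rintro ⟨⟨a, b⟩, ⟨c, e⟩⟩ h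
    simp only [Finset.mem_product, mem_antidiagonal] at h ⊢
    ext i; fin_cases i <;> simp [← h.1, ← h.2]
  · rintro ⟨f, g⟩ h
    simp only [Finset.mem_product, mem_antidiagonal] at h ⊢
    exact ⟨by simpa using congr($h 0), by simpa using congr($h 1)⟩
  · rintro ⟨⟨a, b⟩, ⟨c, e⟩⟩ -
    simp
  · rintro ⟨f, g⟩ -
    simp [single_add_single_eq]
  · rintro ⟨⟨a, b⟩, ⟨c, e⟩⟩ -
    rfl

@[simp] lemma bc_inU [Semiring A] (x : PowerSeries A) (p q : ℕ) :
    bc p q (inU x) = if q = 0 then PowerSeries.coeff p x else 0 := by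
  show (if _ then _ else _) = _
  simp

@[simp] lemma bc_inV [Semiring A] (x : PowerSeries A) (p q : ℕ) :
    bc p q (inV x) = if p = 0 then PowerSeries.coeff q x else 0 := by
  show (if _ then _ else _) = _
  simp

lemma bc_inU_mul_inV [Semiring A] (x y : PowerSeries A) (p q : ℕ) :
    bc p q (inU x * inV y) = PowerSeries.coeff p x * PowerSeries.coeff q y := by
  simp [bc_mul, ← Finset.sum_filter, filter_antidiagonal_fst_eq_zero,
    filter_antidiagonal_snd_eq_zero]

lemma bc_inV_mul_inU [Semiring A] (x y : PowerSeries A) (p q : ℕ) :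
    bc p q (inV y * inU x) = PowerSeries.coeff q y * PowerSeries.coeff p x := by
  simp [bc_mul, ← Finset.sum_filter, filter_antidiagonal_fst_eq_zero,
    filter_antidiagonal_snd_eq_zero]

lemma inU_mul [Semiring A] (x y : PowerSeries A) : inU (x * y) = inU x * inU y := by
  refine bc_ext fun p q => ?_
  rcases q with _ | q
  · simp [bc_mul, PowerSeries.coeff_mul]
  · rw [bc_inU, if_neg q.succ_ne_zero, bc_mul, eq_comm]
    refine Finset.sum_eq_zero fun i _ => Finset.sum_eq_zero fun j hj => ?_
    rw [mem_antidiagonal] at hj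
    by_cases h : j.1 = 0
    · simp [h, show j.2 ≠ 0 by omega]
    · simp [h]

lemma inV_mul [Semiring A] (x y : PowerSeries A) : inV (x * y) = inV x * inV y := by
  refine bc_ext fun p q => ?_
  rcases p with _ | p
  · simp [bc_mul, PowerSeries.coeff_mul]
  · rw [bc_inV, if_neg p.succ_ne_zero, bc_mul, eq_comm]
    refine Finset.sum_eq_zero fun i hi => Finset.sum_eq_zero fun j _ => ?_
    rw [mem_antidiagonal] at hi
    by_cases h : i.1 = 0
    · simp [h, show i.2 ≠ 0 by omega]
    · simp [h]

lemma inV_one [Semiring A] : inV (1 : PowerSeries A) = 1 := by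
  refine bc_ext fun p q => ?_
  rw [bc_inV, bc, MvPowerSeries.coeff_one]
  rcases p with _ | p <;> simp [PowerSeries.coeff_one]

lemma bc_X_mul [Semiring A] (i : Fin 2) (φ : Bi A) (p q : ℕ) :
    bc p q (MvPowerSeries.X i * φ) =
      if Finsupp.single i 1 ≤ Finsupp.single 0 p + Finsupp.single 1 q then
        MvPowerSeries.coeff (Finsupp.single 0 p + Finsupp.single 1 q - Finsupp.single i 1) φ
      else 0 := by
  rw [bc, MvPowerSeries.X, MvPowerSeries.coeff_monomial_mul, one_mul]

@[simp] lemma bc_zero_X_zero_mul [Semiring A] (φ : Bi A) (q : ℕ) :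
    bc 0 q (MvPowerSeries.X 0 * φ) = 0 := by
  simp [bc_X_mul]

@[simp] lemma bc_succ_X_zero_mul [Semiring A] (φ : Bi A) (p q : ℕ) :
    bc (p + 1) q (MvPowerSeries.X 0 * φ) = bc p q φ := by
  rw [bc_X_mul, if_pos (by simp), bc]
  congr 2
  ext i; fin_cases i <;> simp

@[simp] lemma bc_zero_X_one_mul [Semiring A] (φ : Bi A) (p : ℕ) :
    bc p 0 (MvPowerSeries.X 1 * φ) = 0 := by
  simp [bc_X_mul]

@[simp] lemma bc_succ_X_one_mul [Semiring A] (φ : Bi A) (p q : ℕ) :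
    bc p (q + 1) (MvPowerSeries.X 1 * φ) = bc p q φ := by
  rw [bc_X_mul, if_pos (by simp), bc]
  congr 2
  ext i; fin_cases i <;> simp

@[simp] lemma bc_sub [Ring A] (φ ψ : Bi A) (p q : ℕ) :
    bc p q (φ - ψ) = bc p q φ - bc p q ψ :=
  map_sub _ φ ψ

@[simp] lemma bc_zsmul [Ring A] (c : ℤ) (φ : Bi A) (p q : ℕ) :
    bc p q (c • φ) = c • bc p q φ :=
  map_zsmul _ c φ

lemma commute_inU_inV [Semiring A] {x y : PowerSeries A}
    (h : ∀ r s, Commute (PowerSeries.coeff r x) (PowerSeries.coeff s y)) :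
    Commute (inU x) (inV y) :=
  bc_ext fun p q => by rw [bc_inU_mul_inV, bc_inV_mul_inU]; exact h p q

open PowerSeries in
lemma X_sub_X_mul_commutator_eq_of_coeff [Ring A] {x y z w : PowerSeries A} {c : ℤ}
    (hx : ∀ s, Commute (coeff 0 x) (coeff s y)) (hy : ∀ r, Commute (coeff r x) (coeff 0 y))
    (h : ∀ r s, (coeff (r + 1) x * coeff s y - coeff s y * coeff (r + 1) x)
        - (coeff r x * coeff (s + 1) y - coeff (s + 1) y * coeff r x)
      = c • (coeff r z * coeff s w - coeff s z * coeff r w)) :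
    (MvPowerSeries.X 1 - MvPowerSeries.X 0) * (inU x * inV y - inV y * inU x)
      = c • (MvPowerSeries.X 0 * MvPowerSeries.X 1 * (inU z * inV w - inV z * inU w)) := by
  refine bc_ext fun p q => ?_
  rcases p with _ | p <;> rcases q with _ | q <;>
    simp only [sub_mul, mul_assoc, bc_sub, bc_zsmul, bc_zero_X_zero_mul, bc_succ_X_zero_mul,
      bc_zero_X_one_mul, bc_succ_X_one_mul, bc_inU_mul_inV, bc_inV_mul_inU]
  · simp
  · rw [(hx q).eq, sub_self, sub_zero, smul_zero]
  · rw [(hy p).eq, sub_self, sub_zero, smul_zero]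
  · exact h p q

lemma X_sub_X_mul_commutator_inverse_mul [Ring A] {d b : PowerSeries A} (hd : IsUnit d)
    (hcomm : Commute (inU d) (inV d))
    (hrel : (MvPowerSeries.X 1 - MvPowerSeries.X 0) * (inU d * inV b - inV b * inU d)
      = MvPowerSeries.X 0 * MvPowerSeries.X 1 * (inU d * inV b - inV d * inU b)) :
    (MvPowerSeries.X 1 - MvPowerSeries.X 0) *
        (inU d * inV (Ring.inverse d * b) - inV (Ring.inverse d * b) * inU d)
      = MvPowerSeries.X 0 * MvPowerSeries.X 1 *
        (inU d * (inV (Ring.inverse d * b) - inU (Ring.inverse d * b))) := by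
  set g := Ring.inverse d
  set δ : Bi A := MvPowerSeries.X 1 - MvPowerSeries.X 0
  set π : Bi A := MvPowerSeries.X 0 * MvPowerSeries.X 1
  have hδ (φ : Bi A) : Commute δ φ :=
    ((MvPowerSeries.commute_X φ 1).sub_right (MvPowerSeries.commute_X φ 0)).symm
  have hπ (φ : Bi A) : Commute π φ :=
    ((MvPowerSeries.commute_X φ 0).mul_right (MvPowerSeries.commute_X φ 1)).symm
  have hgd : inV g * inV d = 1 := by rw [← inV_mul, Ring.inverse_mul_cancel d hd, inV_one]
  have hdg : inV d * inV g = 1 := by rw [← inV_mul, Ring.mul_inverse_cancel d hd, inV_one]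
  have hDG : Commute (inU d) (inV g) :=
    hcomm.units_inv_right (u := ⟨inV d, inV g, hdg, hgd⟩)
  have hb : inU d * inU (g * b) = inU b := by
    rw [← inU_mul, ← mul_assoc, Ring.mul_inverse_cancel d hd, one_mul]
  rw [inV_mul]
  calc δ * (inU d * (inV g * inV b) - inV g * inV b * inU d)
      = δ * (inV g * (inU d * inV b - inV b * inU d)) := by
        simp only [mul_sub, ← mul_assoc, hDG.eq]
    _ = inV g * (δ * (inU d * inV b - inV b * inU d)) := (hδ _).left_comm _
    _ = π * (inV g * (inU d * inV b - inV d * inU b)) := by rw [hrel, (hπ _).left_comm]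
    _ = π * (inU d * (inV g * inV b - inU (g * b))) := by
        simp only [mul_sub, ← mul_assoc, ← hDG.eq, hgd, one_mul, hb]

end Bivariate

section Relations

open PowerSeries

variable {m n : ℕ}

lemma proj_coeff_tF (i j : Fin (m + n)) (p : ℕ) :
    proj m n (coeff p (tF i j)) = coeff p (t i j) := by
  rcases p with _ | p
  · by_cases h : i = j <;> simp [tF, t, h]
  · simp [tF, t, tGen]

lemma coeff_t_relation (i j k l : Fin (m + n)) (r s : ℕ) :
    (coeff (r + 1) (t i j) * coeff s (t k l) - coeff s (t k l) * coeff (r + 1) (t i j))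
        - (coeff r (t i j) * coeff (s + 1) (t k l) - coeff (s + 1) (t k l) * coeff r (t i j))
      = sgn3 m i j k •
        (coeff r (t k j) * coeff s (t i l) - coeff s (t k j) * coeff r (t i l)) := by
  have h := RingQuot.mkAlgHom_rel ℂ (YRel.rel (n := n) i j k l r s)
  rw [map_zero, ← proj] at h
  simp only [relElt, map_sub, map_mul, map_zsmul, proj_coeff_tF] at h
  rwa [sub_eq_zero] at h

lemma coeff_zero_t (i j : Fin (m + n)) : coeff 0 (t i j) = if i = j then 1 else 0 := by
  simp [t]

lemma commute_coeff_zero_t (i j : Fin (m + n)) (a : Yangian m n) :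
    Commute (coeff 0 (t i j)) a := by
  rw [coeff_zero_t]
  split_ifs
  exacts [Commute.one_left a, Commute.zero_left a]

lemma t_relation (i j k l : Fin (m + n)) :
    (MvPowerSeries.X 1 - MvPowerSeries.X 0) *
        (inU (t i j) * inV (t k l) - inV (t k l) * inU (t i j))
      = sgn3 m i j k • (MvPowerSeries.X 0 * MvPowerSeries.X 1 *
        (inU (t k j) * inV (t i l) - inV (t k j) * inU (t i l))) :=
  X_sub_X_mul_commutator_eq_of_coeff (fun _ => commute_coeff_zero_t i j _)
    (fun _ => (commute_coeff_zero_t k l _).symm) (coeff_t_relation i j k l)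

lemma sgn3_self_of_lt (i : Fin (m + n)) (hi : (i : ℕ) < m) : sgn3 m i i i = 1 := by
  simp [sgn3, par, hi]

lemma commute_coeff_t_self (i : Fin (m + n)) (hi : (i : ℕ) < m) (r s : ℕ) :
    Commute (coeff r (t i i)) (coeff s (t i i)) := by
  induction r generalizing s with
  | zero => exact commute_coeff_zero_t i i _
  | succ r ih =>
    have h := coeff_t_relation i i i i r s
    rw [sgn3_self_of_lt i hi, one_smul, (ih s).eq, (ih (s + 1)).eq, sub_self, sub_self,
      sub_zero] at h
    exact sub_eq_zero.mp h

lemma isUnit_t_self (i : Fin (m + n)) : IsUnit (t i i) := by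
  rw [isUnit_iff_constantCoeff, ← coeff_zero_eq_constantCoeff_apply, coeff_zero_t, if_pos rfl]
  exact isUnit_one

theorem X_sub_X_mul_commutator_t_inverse_mul (i l : Fin (m + n)) (hi : (i : ℕ) < m) :
    (MvPowerSeries.X 1 - MvPowerSeries.X 0) *
        (inU (t i i) * inV (Ring.inverse (t i i) * t i l)
          - inV (Ring.inverse (t i i) * t i l) * inU (t i i))
      = MvPowerSeries.X 0 * MvPowerSeries.X 1 * (inU (t i i) *
        (inV (Ring.inverse (t i i) * t i l) - inU (Ring.inverse (t i i) * t i l))) := by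
  refine X_sub_X_mul_commutator_inverse_mul (isUnit_t_self i)
    (commute_inU_inV (commute_coeff_t_self i hi)) ?_
  simpa [sgn3_self_of_lt i hi] using t_relation i i i l

end Relations

/-- In `Y(gl_{1|1})`:
`(u-v)[d_1(u), e_1(v)] = d_1(u)(e_1(v) - e_1(u))`, stated coefficientwise
(coefficient of `u^{-r} v^{-s}` after clearing the factor `u - v`, inside the
two-variable series ring). -/
theorem d1_e1_relation (r s : ℕ) :
    bc (r+1) s (inU d1 * inV e1 - inV e1 * inU d1)
      - bc r (s+1) (inU d1 * inV e1 - inV e1 * inU d1)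
    = bc r s (inU d1 * (inV e1 - inU e1)) := by
  have key := X_sub_X_mul_commutator_t_inverse_mul (m := 1) (n := 1) 0 1 (by decide)
  unfold e1 d1
  simpa [sub_mul, mul_assoc] using congrArg (bc (r + 1) (s + 1)) key

end SuperYangian
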